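/- arXiv:1808.06082 — 2 statements merged into one kernel-verified Lean document; each statement's English description precedes it below -/
import Mathlib

section
/- Let T be a binary tree with μ([T]) > 0 and suppose σ ∈ T satisfies μ([T_σ]) > (1 − ε) · 2^{-|σ|} with ε < 1/2. Then there exist two incomparable extensions τ₀ and τ₁ of σ in T such that μ([T_{τ_i}]) > (1 − ε) · 2^{-|τ_i|} for i = 0, 1. -/
open MeasureTheory

/-- The length-`n` initial segment of `X ∈ 2^ω` as a finite binary string. -/
def initSeg (X : ℕ → Bool) (n : ℕ) : List Bool := List.ofFn fun i : Fin n => X i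

/-- A binary tree: a set of finite binary strings closed under initial segments. -/
def IsTree (T : Set (List Bool)) : Prop := ∀ σ ∈ T, ∀ τ : List Bool, τ <+: σ → τ ∈ T

/-- `[T]`: the set of infinite paths through `T`. -/
def paths (T : Set (List Bool)) : Set (ℕ → Bool) := {X | ∀ n, initSeg X n ∈ T}

/-- `T_σ`: the nodes of `T` comparable with `σ`. -/
def subtree (T : Set (List Bool)) (σ : List Bool) : Set (List Bool) :=
  {τ ∈ T | τ <+: σ ∨ σ <+: τ}

/-- `T ∩ 2^n`: the strings of length `n` in `T`. -/
def level (T : Set (List Bool)) (n : ℕ) : Set (List Bool) := {σ ∈ T | σ.length = n}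

/-- The basic cylinder determined by the string `σ`. -/
def cyl (σ : List Bool) : Set (ℕ → Bool) := {X | initSeg X σ.length = σ}

/-- `μ` is the uniform (coin-flipping) measure on Cantor space:
`μ([σ]) = 2^{-|σ|}` for every string `σ`. -/
def UniformOnCantor (μ : Measure (ℕ → Bool)) : Prop :=
  ∀ σ : List Bool, μ (cyl σ) = (2 : ENNReal)⁻¹ ^ σ.length

/-- A perfect tree: nonempty and every node has two incomparable extensions in the tree. -/
def IsPerfectTree (T : Set (List Bool)) : Prop :=
  T.Nonempty ∧ ∀ σ ∈ T, ∃ τ₀ ∈ T, ∃ τ₁ ∈ T,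
    σ <+: τ₀ ∧ σ <+: τ₁ ∧ ¬ τ₀ <+: τ₁ ∧ ¬ τ₁ <+: τ₀

open scoped ENNReal

/-!
Write `m τ = μ([T_τ])`, so that `m τ = m (τ0) + m (τ1)` and `m τ ≤ 2^{-|τ|}`. If no extension `τ`
of `σ` had both children of density `> c`, then descending from `σ`, always into a child not known
to be light, gives `m σ ≤ c · 2^{-|σ|} + 2^{-|σ|-n}` for every `n`, hence `m σ ≤ c · 2^{-|σ|}`.
So some `τ ⊇ σ` has two children `τ0`, `τ1` of density `> c`: they are incomparable, and they lie
in `T` because their subtrees carry positive measure.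
-/

theorem initSeg_length (X : ℕ → Bool) (n : ℕ) : (initSeg X n).length = n := by
  simp [initSeg]

theorem initSeg_succ (X : ℕ → Bool) (n : ℕ) : initSeg X (n + 1) = initSeg X n ++ [X n] := by
  rw [initSeg, List.ofFn_succ', List.concat_eq_append]
  simp [initSeg]

theorem initSeg_prefix_initSeg (X : ℕ → Bool) {m n : ℕ} (h : m ≤ n) :
    initSeg X m <+: initSeg X n := by
  induction n, h using Nat.le_induction with
  | base => exact List.prefix_rfl
  | succ n _ ih => exact ih.trans (initSeg_succ X n ▸ List.prefix_append _ _)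

theorem cyl_append_singleton (τ : List Bool) (b : Bool) :
    cyl (τ ++ [b]) = cyl τ ∩ {X | X τ.length = b} := by
  ext X
  simp only [cyl, Set.mem_inter_iff, Set.mem_ofPred_eq, List.length_append,
    List.length_singleton, initSeg_succ]
  constructor
  · intro h
    obtain ⟨hτ, hb⟩ := List.append_inj h (initSeg_length X τ.length)
    exact ⟨hτ, by simpa using hb⟩
  · rintro ⟨hτ, rfl⟩
    rw [hτ]

theorem paths_subtree_eq_inter (T : Set (List Bool)) (ρ : List Bool) :
    paths (subtree T ρ) = paths T ∩ cyl ρ := by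
  ext X
  constructor
  · intro h
    refine ⟨fun n => (h n).1, ?_⟩
    rcases (h ρ.length).2 with h' | h'
    · exact h'.eq_of_length (initSeg_length X ρ.length)
    · exact (h'.eq_of_length (initSeg_length X ρ.length).symm).symm
  · rintro ⟨hT, hρ : initSeg X ρ.length = ρ⟩ n
    refine ⟨hT n, ?_⟩
    rcases le_total n ρ.length with h | h
    · exact Or.inl (hρ ▸ initSeg_prefix_initSeg X h)
    · exact Or.inr (hρ ▸ initSeg_prefix_initSeg X h)

theorem mem_of_measure_paths_subtree_ne_zero {μ : Measure (ℕ → Bool)} {T : Set (List Bool)}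
    {ρ : List Bool} (h : μ (paths (subtree T ρ)) ≠ 0) : ρ ∈ T := by
  obtain ⟨X, hT, hρ⟩ := nonempty_of_measure_ne_zero (paths_subtree_eq_inter T ρ ▸ h)
  exact hρ ▸ hT ρ.length

theorem measure_paths_subtree_le {μ : Measure (ℕ → Bool)} (hμ : UniformOnCantor μ)
    (T : Set (List Bool)) (τ : List Bool) :
    μ (paths (subtree T τ)) ≤ 2⁻¹ ^ τ.length :=
  paths_subtree_eq_inter T τ ▸ (measure_mono Set.inter_subset_right).trans_eq (hμ τ)

theorem measure_paths_subtree_eq_add (μ : Measure (ℕ → Bool)) (T : Set (List Bool))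
    (τ : List Bool) (b : Bool) :
    μ (paths (subtree T τ)) =
      μ (paths (subtree T (τ ++ [b]))) + μ (paths (subtree T (τ ++ [!b]))) := by
  have hcompl : {X : ℕ → Bool | X τ.length = b}ᶜ = {X | X τ.length = !b} := by
    ext X
    cases b <;> simp
  simp only [paths_subtree_eq_inter, cyl_append_singleton, ← Set.inter_assoc, ← hcompl]
  exact (measure_inter_add_sdiff _ (measurableSet_eq_fun (measurable_pi_apply _)
    measurable_const)).symm

section Mass

variable {m : List Bool → ℝ≥0∞} {c : ℝ≥0∞} {σ : List Bool}

theorem le_mul_inv_two_pow_add_of_forall_exists_child_le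
    (hsplit : ∀ τ b, m τ = m (τ ++ [b]) + m (τ ++ [!b]))
    (hle : ∀ τ, m τ ≤ 2⁻¹ ^ τ.length)
    (hchild : ∀ τ, σ <+: τ → ∃ b, m (τ ++ [b]) ≤ c * 2⁻¹ ^ (τ.length + 1))
    (n : ℕ) (τ : List Bool) (hτ : σ <+: τ) :
    m τ ≤ c * 2⁻¹ ^ τ.length + 2⁻¹ ^ (τ.length + n) := by
  induction n generalizing τ with
  | zero => exact (hle τ).trans le_add_self
  | succ n ih =>
    obtain ⟨b, hb⟩ := hchild τ hτ
    have hnext := ih (τ ++ [!b]) (hτ.trans (List.prefix_append _ _))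
    simp only [List.length_append, List.length_singleton] at hnext
    calc m τ = m (τ ++ [b]) + m (τ ++ [!b]) := hsplit τ b
      _ ≤ c * 2⁻¹ ^ (τ.length + 1) + (c * 2⁻¹ ^ (τ.length + 1) + 2⁻¹ ^ (τ.length + 1 + n)) :=
        add_le_add hb hnext
      _ = c * 2⁻¹ ^ τ.length + 2⁻¹ ^ (τ.length + (n + 1)) := by
        rw [← add_assoc, pow_succ, ← mul_assoc, ← div_eq_mul_inv, ENNReal.add_halves,
          add_right_comm, add_assoc]

theorem le_mul_inv_two_pow_of_forall_exists_child_le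
    (hsplit : ∀ τ b, m τ = m (τ ++ [b]) + m (τ ++ [!b]))
    (hle : ∀ τ, m τ ≤ 2⁻¹ ^ τ.length)
    (hchild : ∀ τ, σ <+: τ → ∃ b, m (τ ++ [b]) ≤ c * 2⁻¹ ^ (τ.length + 1)) :
    m σ ≤ c * 2⁻¹ ^ σ.length := by
  have hlim : Filter.Tendsto (fun n => c * 2⁻¹ ^ σ.length + 2⁻¹ ^ (σ.length + n))
      Filter.atTop (nhds (c * 2⁻¹ ^ σ.length)) := by
    simpa only [pow_add, add_zero, mul_zero] using tendsto_const_nhds.add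
      (ENNReal.Tendsto.const_mul (ENNReal.tendsto_pow_atTop_nhds_zero_of_lt_one
        (ENNReal.inv_lt_one.2 ENNReal.one_lt_two)) (.inr (by simp)))
  exact ge_of_tendsto' hlim fun n =>
    le_mul_inv_two_pow_add_of_forall_exists_child_le hsplit hle hchild n σ List.prefix_rfl

theorem exists_prefix_children_lt_of_lt
    (hsplit : ∀ τ b, m τ = m (τ ++ [b]) + m (τ ++ [!b]))
    (hle : ∀ τ, m τ ≤ 2⁻¹ ^ τ.length) (h : c * 2⁻¹ ^ σ.length < m σ) :
    ∃ τ, σ <+: τ ∧ c * 2⁻¹ ^ (τ.length + 1) < m (τ ++ [false]) ∧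
      c * 2⁻¹ ^ (τ.length + 1) < m (τ ++ [true]) := by
  by_contra! hcon
  refine h.not_ge (le_mul_inv_two_pow_of_forall_exists_child_le hsplit hle fun τ hτ => ?_)
  by_cases h0 : m (τ ++ [false]) ≤ c * 2⁻¹ ^ (τ.length + 1)
  · exact ⟨false, h0⟩
  · exact ⟨true, hcon τ hτ (not_le.1 h0)⟩

end Mass

theorem stmt7_general (μ : Measure (ℕ → Bool)) (hμ : UniformOnCantor μ)
    (T : Set (List Bool))
    (ε : ℝ) (σ : List Bool)
    (hd : ENNReal.ofReal ((1 - ε) * (2 : ℝ)⁻¹ ^ σ.length) < μ (paths (subtree T σ))) :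
    ∃ τ₀ ∈ T, ∃ τ₁ ∈ T, σ <+: τ₀ ∧ σ <+: τ₁ ∧ ¬ τ₀ <+: τ₁ ∧ ¬ τ₁ <+: τ₀ ∧
      ENNReal.ofReal ((1 - ε) * (2 : ℝ)⁻¹ ^ τ₀.length) < μ (paths (subtree T τ₀)) ∧
      ENNReal.ofReal ((1 - ε) * (2 : ℝ)⁻¹ ^ τ₁.length) < μ (paths (subtree T τ₁)) := by
  have hweight (n : ℕ) :
      ENNReal.ofReal ((1 - ε) * (2 : ℝ)⁻¹ ^ n) = ENNReal.ofReal (1 - ε) * 2⁻¹ ^ n := by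
    rw [ENNReal.ofReal_mul' (by positivity), ENNReal.ofReal_pow (by norm_num),
      ENNReal.ofReal_inv_of_pos two_pos, ENNReal.ofReal_ofNat]
  obtain ⟨τ, hστ, h0, h1⟩ := exists_prefix_children_lt_of_lt (measure_paths_subtree_eq_add μ T)
    (measure_paths_subtree_le hμ T) (by rwa [← hweight])
  refine ⟨τ ++ [false], mem_of_measure_paths_subtree_ne_zero (pos_of_gt h0).ne',
    τ ++ [true], mem_of_measure_paths_subtree_ne_zero (pos_of_gt h1).ne',
    hστ.trans (List.prefix_append _ _), hστ.trans (List.prefix_append _ _),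
    by simp, by simp, ?_, ?_⟩ <;> simpa only [hweight, List.length_append, List.length_singleton]

/-- If `σ ∈ T` has density `> 1 - ε` with `ε < 1/2`, then `σ` has two incomparable
extensions in `T` of density `> 1 - ε`. -/
theorem stmt7 (μ : Measure (ℕ → Bool)) (hμ : UniformOnCantor μ)
    (T : Set (List Bool)) (hT : IsTree T) (hpos : 0 < μ (paths T))
    (ε : ℝ) (hε : ε < 1 / 2) (σ : List Bool) (hσ : σ ∈ T)
    (hd : ENNReal.ofReal ((1 - ε) * (2 : ℝ)⁻¹ ^ σ.length) < μ (paths (subtree T σ))) :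
    ∃ τ₀ ∈ T, ∃ τ₁ ∈ T, σ <+: τ₀ ∧ σ <+: τ₁ ∧ ¬ τ₀ <+: τ₁ ∧ ¬ τ₁ <+: τ₀ ∧
      ENNReal.ofReal ((1 - ε) * (2 : ℝ)⁻¹ ^ τ₀.length) < μ (paths (subtree T τ₀)) ∧
      ENNReal.ofReal ((1 - ε) * (2 : ℝ)⁻¹ ^ τ₁.length) < μ (paths (subtree T τ₁)) :=
  stmt7_general μ hμ T ε σ hd
end

section
/- Let T be a binary tree, n a natural number with 2^{-n} < ε·δ, and suppose μ([T]) > δ > 0. Define k = max{j ≤ 2^n : ∃l, |2^l \ T| ≥ j·2^{l−n}} (the maximum fraction, in units of 2^{-n}, of a level missing from T). Then k < 2^n, and if l witnesses the maximum, there exists σ ∈ T of length l with μ([T_σ]) > (1 − ε)·2^{-|σ|}. -/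
open MeasureTheory

/-! If every node `σ` of `T` at level `l` had `μ([T_σ]) ≤ (1 - ε)·2^{-l}`, then, since `μ([T_σ])` is
the limit of the densities `|T_σ ∩ 2^L|·2^{-L}`, at one common deeper level `L` every `T_σ` would
miss at least a `2^{-n}/δ` fraction of the `2^{L-l}` extensions of `σ`. As `T` has more than
`δ·2^l` nodes at level `l`, this adds more than `2^{L-n}` missing strings at level `L` to the
`k·2^{L-n}` lying above the strings missing at level `l`, contradicting the maximality of `k`.
That `k < 2^n` holds because no level of `T` is empty. -/

open Finset Filter Topology

namespace BinaryTree

noncomputable def strings (L : ℕ) : Finset (List Bool) :=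
  (univ : Finset (List.Vector Bool L)).map ⟨List.Vector.toList, List.Vector.toList_injective⟩

@[simp] lemma mem_strings {L : ℕ} {σ : List Bool} : σ ∈ strings L ↔ σ.length = L :=
  ⟨fun h => by obtain ⟨v, -, rfl⟩ := mem_map.1 h; exact v.toList_length,
    fun h => mem_map.2 ⟨⟨σ, h⟩, mem_univ _, rfl⟩⟩

lemma card_strings (L : ℕ) : #(strings L) = 2 ^ L := by
  rw [strings, card_map, card_univ, card_vector, Fintype.card_bool]

open Classical in
noncomputable def levelFinset (S : Set (List Bool)) (L : ℕ) : Finset (List Bool) :=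
  {σ ∈ strings L | σ ∈ S}

open Classical in
noncomputable def missingFinset (S : Set (List Bool)) (L : ℕ) : Finset (List Bool) :=
  {σ ∈ strings L | σ ∉ S}

@[simp] lemma mem_levelFinset {S : Set (List Bool)} {L : ℕ} {σ : List Bool} :
    σ ∈ levelFinset S L ↔ σ ∈ S ∧ σ.length = L := by
  simp [levelFinset, and_comm]

lemma ncard_diff_eq_card_missingFinset (S : Set (List Bool)) (L : ℕ) :
    ({σ : List Bool | σ.length = L} \ S).ncard = #(missingFinset S L) := by
  rw [← Set.ncard_coe_finset]
  congr 1
  ext σ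
  simp [missingFinset]

lemma card_levelFinset_add_card_missingFinset (S : Set (List Bool)) (L : ℕ) :
    #(levelFinset S L) + #(missingFinset S L) = 2 ^ L := by
  classical
  rw [← card_strings L, levelFinset, missingFinset]
  convert card_filter_add_card_filter_not (s := strings L) (· ∈ S)

lemma card_missingFinset_lt {S : Set (List Bool)} {L : ℕ} (h : 0 < #(levelFinset S L)) :
    #(missingFinset S L) < 2 ^ L := by
  have := card_levelFinset_add_card_missingFinset S L
  omega

lemma filter_take_eq_levelFinset_subtree {T : Set (List Bool)} {σ : List Bool} {l : ℕ}
    (hσ : σ.length = l) (m : ℕ) [DecidablePred fun τ : List Bool => τ.take l = σ] :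
    {τ ∈ levelFinset T (l + m) | τ.take l = σ} = levelFinset (subtree T σ) (l + m) := by
  ext τ
  have hprefix : τ.take l = σ ↔ σ <+: τ := by rw [List.prefix_iff_eq_take, hσ, eq_comm]
  simp only [mem_filter, mem_levelFinset, subtree, Set.mem_ofPred_eq, hprefix]
  constructor
  · rintro ⟨⟨hτ, hlen⟩, hστ⟩
    exact ⟨⟨hτ, Or.inr hστ⟩, hlen⟩
  · rintro ⟨⟨hτ, hτσ | hστ⟩, hlen⟩
    · exact ⟨⟨hτ, hlen⟩, (hτσ.eq_of_length (by have := hτσ.length_le; omega)) ▸ hτσ⟩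
    · exact ⟨⟨hτ, hlen⟩, hστ⟩

lemma card_levelFinset_eq_sum_subtree {T : Set (List Bool)} (hT : IsTree T) (l m : ℕ) :
    #(levelFinset T (l + m)) = ∑ σ ∈ levelFinset T l, #(levelFinset (subtree T σ) (l + m)) := by
  classical
  rw [card_eq_sum_card_fiberwise (f := fun τ => τ.take l) (t := levelFinset T l)]
  · refine sum_congr rfl fun σ hσ => ?_
    rw [filter_take_eq_levelFinset_subtree (mem_levelFinset.1 hσ).2]
  · intro τ hτ
    simp only [mem_coe, mem_levelFinset] at hτ ⊢
    exact ⟨hT τ hτ.1 _ (List.take_prefix l τ), by simp [hτ.2]⟩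

lemma card_missingFinset_add_ge {T : Set (List Bool)} (hT : IsTree T) {l m : ℕ} {c : ℝ}
    (h : ∀ σ ∈ levelFinset T l, (#(levelFinset (subtree T σ) (l + m)) : ℝ) ≤ c * 2 ^ m) :
    ((#(missingFinset T l) : ℝ) + (1 - c) * #(levelFinset T l)) * 2 ^ m ≤
      #(missingFinset T (l + m)) := by
  have hsum : (#(levelFinset T (l + m)) : ℝ) ≤ #(levelFinset T l) * (c * 2 ^ m) := by
    rw [card_levelFinset_eq_sum_subtree hT, Nat.cast_sum]
    simpa using sum_le_card_nsmul _ _ _ h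
  have hl : (#(levelFinset T l) + #(missingFinset T l) : ℝ) = 2 ^ l := by
    exact_mod_cast card_levelFinset_add_card_missingFinset T l
  have hlm : (#(levelFinset T (l + m)) + #(missingFinset T (l + m)) : ℝ) = 2 ^ l * 2 ^ m := by
    rw [← pow_add]; exact_mod_cast card_levelFinset_add_card_missingFinset T (l + m)
  linear_combination hsum + 2 ^ m * hl - hlm

lemma subtree_isTree {T : Set (List Bool)} (hT : IsTree T) (σ : List Bool) :
    IsTree (subtree T σ) := by
  rintro τ ⟨hτT, hcomp⟩ ρ hρ
  refine ⟨hT τ hτT ρ hρ, ?_⟩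
  rcases hcomp with h | h
  · exact Or.inl (hρ.trans h)
  · exact (List.prefix_or_prefix_of_prefix hρ h).imp id id

lemma initSeg_prefix (X : ℕ → Bool) {m n : ℕ} (h : m ≤ n) : initSeg X m <+: initSeg X n := by
  obtain ⟨c, rfl⟩ := Nat.exists_eq_add_of_le h
  refine ⟨List.ofFn fun j : Fin c => X (m + j), ?_⟩
  simp only [initSeg]
  conv_rhs => rw [List.ofFn_add]
  rfl

lemma paths_subset_biUnion_subtree (T : Set (List Bool)) (l : ℕ) :
    paths T ⊆ ⋃ σ ∈ levelFinset T l, paths (subtree T σ) := by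
  intro X hX
  refine Set.mem_biUnion (mem_levelFinset.2 ⟨hX l, by simp [initSeg]⟩) fun n => ⟨hX n, ?_⟩
  rcases le_total n l with h | h
  · exact Or.inl (initSeg_prefix X h)
  · exact Or.inr (initSeg_prefix X h)

lemma cyl_nil : cyl [] = Set.univ := by
  ext X
  simp [cyl, initSeg]

lemma isProbabilityMeasure_of_uniformOnCantor {μ : Measure (ℕ → Bool)} (hμ : UniformOnCantor μ) :
    IsProbabilityMeasure μ :=
  ⟨by rw [← cyl_nil, hμ, List.length_nil, pow_zero]⟩

lemma measurableSet_setOf_initSeg_mem (S : Set (List Bool)) (L : ℕ) :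
    MeasurableSet {X : ℕ → Bool | initSeg X L ∈ S} :=
  measurable_pi_lambda (fun (X : ℕ → Bool) (i : Fin L) => X i)
    (fun i => measurable_pi_apply (i : ℕ))
    (Set.to_countable {f : Fin L → Bool | List.ofFn f ∈ S}).measurableSet

lemma setOf_initSeg_mem_eq_biUnion_cyl (S : Set (List Bool)) (L : ℕ) :
    {X : ℕ → Bool | initSeg X L ∈ S} = ⋃ σ ∈ levelFinset S L, cyl σ := by
  ext X
  simp only [Set.mem_ofPred_eq, Set.mem_iUnion, mem_levelFinset, cyl, exists_prop]
  constructor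
  · intro hX
    exact ⟨initSeg X L, ⟨hX, by simp [initSeg]⟩, by simp [initSeg]⟩
  · rintro ⟨σ, ⟨hσ, rfl⟩, hXσ⟩
    rwa [hXσ]

lemma measureReal_setOf_initSeg_mem {μ : Measure (ℕ → Bool)} (hμ : UniformOnCantor μ)
    (S : Set (List Bool)) (L : ℕ) :
    μ.real {X | initSeg X L ∈ S} = #(levelFinset S L) / 2 ^ L := by
  have := isProbabilityMeasure_of_uniformOnCantor hμ
  rw [setOf_initSeg_mem_eq_biUnion_cyl, measureReal_biUnion_finset]
  · rw [sum_congr rfl fun σ hσ => by rw [measureReal_def, hμ, (mem_levelFinset.1 hσ).2]]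
    simp [div_eq_mul_inv]
  · intro σ hσ τ hτ hne
    rw [Function.onFun, Set.disjoint_left]
    intro X (hXσ : initSeg X σ.length = σ) (hXτ : initSeg X τ.length = τ)
    rw [(mem_levelFinset.1 hσ).2] at hXσ
    rw [(mem_levelFinset.1 hτ).2] at hXτ
    exact hne (hXσ.symm.trans hXτ)
  · exact fun σ _ => measurableSet_setOf_initSeg_mem {σ} σ.length

lemma paths_eq_iInter (S : Set (List Bool)) : paths S = ⋂ L, {X | initSeg X L ∈ S} := by
  ext X
  simp [paths]

lemma measureReal_paths_le {μ : Measure (ℕ → Bool)} (hμ : UniformOnCantor μ)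
    (S : Set (List Bool)) (L : ℕ) : μ.real (paths S) ≤ #(levelFinset S L) / 2 ^ L := by
  have := isProbabilityMeasure_of_uniformOnCantor hμ
  exact (measureReal_mono fun X (hX : X ∈ paths S) => hX L).trans_eq
    (measureReal_setOf_initSeg_mem hμ S L)

lemma tendsto_card_levelFinset_div {μ : Measure (ℕ → Bool)} (hμ : UniformOnCantor μ)
    {S : Set (List Bool)} (hS : IsTree S) :
    Tendsto (fun L => (#(levelFinset S L) : ℝ) / 2 ^ L) atTop (𝓝 (μ.real (paths S))) := by
  have := isProbabilityMeasure_of_uniformOnCantor hμ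
  have hanti : Antitone fun L => {X : ℕ → Bool | initSeg X L ∈ S} :=
    fun _ _ hmn X hX => hS _ hX _ (initSeg_prefix X hmn)
  have hlim := (ENNReal.tendsto_toReal (measure_ne_top μ _)).comp <| tendsto_measure_iInter_atTop
    (fun L => (measurableSet_setOf_initSeg_mem S L).nullMeasurableSet) hanti
    ⟨0, measure_ne_top μ _⟩
  rw [← paths_eq_iInter] at hlim
  exact hlim.congr fun L => measureReal_setOf_initSeg_mem hμ S L

lemma exists_card_missingFinset_ge {μ : Measure (ℕ → Bool)} (hμ : UniformOnCantor μ)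
    {T : Set (List Bool)} (hT : IsTree T) {l : ℕ} {η : ℝ}
    (h : ∀ σ ∈ levelFinset T l, μ.real (paths (subtree T σ)) < (1 - η) / 2 ^ l) :
    ∃ m, ((#(missingFinset T l) : ℝ) + η * #(levelFinset T l)) * 2 ^ m ≤
      #(missingFinset T (l + m)) := by
  have hev : ∀ᶠ m in atTop, ∀ σ ∈ levelFinset T l,
      (#(levelFinset (subtree T σ) (l + m)) : ℝ) ≤ (1 - η) * 2 ^ m := by
    rw [eventually_all_finset]
    intro σ hσ
    have hlim := (tendsto_card_levelFinset_div hμ (subtree_isTree hT σ)).comp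
      ((tendsto_add_atTop_nat l).congr fun m => add_comm m l)
    filter_upwards [hlim.eventually (eventually_lt_nhds (h σ hσ))] with m hm
    rw [Function.comp_apply, pow_add, div_lt_div_iff₀ (by positivity) (by positivity)] at hm
    nlinarith [pow_pos (two_pos : (0 : ℝ) < 2) l]
  obtain ⟨m, hm⟩ := hev.exists
  exact ⟨m, by simpa using card_missingFinset_add_ge hT hm⟩

lemma lt_card_levelFinset {μ : Measure (ℕ → Bool)} (hμ : UniformOnCantor μ)
    {S : Set (List Bool)} {δ : ℝ} (hδ : δ < μ.real (paths S)) (L : ℕ) :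
    δ * 2 ^ L < #(levelFinset S L) :=
  (lt_div_iff₀ (by positivity)).1 (hδ.trans_le (measureReal_paths_le hμ S L))

lemma lt_two_pow_of_mul_le_card_missingFinset {μ : Measure (ℕ → Bool)} (hμ : UniformOnCantor μ)
    {T : Set (List Bool)} {δ : ℝ} (hδ : 0 < δ) (hδT : δ < μ.real (paths T)) {j n l : ℕ}
    (h : j * 2 ^ l ≤ 2 ^ n * #(missingFinset T l)) : j < 2 ^ n := by
  have hlevel : 0 < #(levelFinset T l) := by
    exact_mod_cast (by positivity : 0 < δ * 2 ^ l).trans (lt_card_levelFinset hμ hδT l)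
  exact Nat.lt_of_mul_lt_mul_right
    (h.trans_lt (Nat.mul_lt_mul_of_pos_left (card_missingFinset_lt hlevel) (by positivity)))

lemma exists_measure_subtree_ne_zero {μ : Measure (ℕ → Bool)} {T : Set (List Bool)}
    (hT : μ (paths T) ≠ 0) (l : ℕ) :
    ∃ σ ∈ levelFinset T l, μ (paths (subtree T σ)) ≠ 0 := by
  by_contra! h
  exact hT (measure_mono_null (paths_subset_biUnion_subtree T l)
    ((measure_biUnion_null_iff (countable_toSet _)).2 h))

lemma exists_succ_mul_pow_le_card_missingFinset {μ : Measure (ℕ → Bool)}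
    (hμ : UniformOnCantor μ) {T : Set (List Bool)} (hT : IsTree T) {δ : ℝ} {n k l : ℕ}
    (hδ : 0 < δ) (hδT : δ < μ.real (paths T)) (hl : k * 2 ^ l ≤ 2 ^ n * #(missingFinset T l))
    (hsub : ∀ σ ∈ levelFinset T l,
      μ.real (paths (subtree T σ)) < (1 - (2 : ℝ)⁻¹ ^ n / δ) / 2 ^ l) :
    ∃ L, (k + 1) * 2 ^ L ≤ 2 ^ n * #(missingFinset T L) := by
  obtain ⟨m, hm⟩ := exists_card_missingFinset_ge hμ hT hsub
  refine ⟨l + m, ?_⟩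
  have hl' : (k : ℝ) * 2 ^ l ≤ 2 ^ n * #(missingFinset T l) := by exact_mod_cast hl
  have hone : (2 : ℝ) ^ n * ((2 : ℝ)⁻¹ ^ n / δ) * δ = 1 := by
    rw [inv_pow]; field_simp
  rw [← Nat.cast_le (α := ℝ)]
  push_cast
  calc ((k : ℝ) + 1) * 2 ^ (l + m)
      = (k * 2 ^ l + 2 ^ n * ((2 : ℝ)⁻¹ ^ n / δ) * (δ * 2 ^ l)) * 2 ^ m := by
        rw [pow_add, ← mul_assoc (_ * _), hone]; ring
    _ ≤ (2 ^ n * #(missingFinset T l) + 2 ^ n * ((2 : ℝ)⁻¹ ^ n / δ) * #(levelFinset T l)) *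
        2 ^ m := by
        gcongr
        exact (lt_card_levelFinset hμ hδT l).le
    _ ≤ 2 ^ n * #(missingFinset T (l + m)) := by
        rw [mul_assoc (2 ^ n : ℝ), ← mul_add, mul_assoc]
        gcongr

end BinaryTree

open BinaryTree

/-- The finitary density argument: with `2^{-n} < ε·δ` and `μ([T]) > δ`, the maximal
`k ≤ 2^n` such that some level `l` misses at least `k·2^{l-n}` strings satisfies
`k < 2^n`, and any witnessing level `l` contains a node of density `> 1 - ε`.
(The inequality `|2^l \ T| ≥ j·2^{l-n}` is stated integrally as
`j·2^l ≤ 2^n·|2^l \ T|`.) -/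
theorem stmt19 (μ : Measure (ℕ → Bool)) (hμ : UniformOnCantor μ)
    (T : Set (List Bool)) (hT : IsTree T) (ε δ : ℝ) (n : ℕ)
    (hδ : 0 < δ) (hn : (2 : ℝ)⁻¹ ^ n < ε * δ)
    (hpos : ENNReal.ofReal δ < μ (paths T))
    (k : ℕ)
    (hk : k = sSup {j : ℕ | j ≤ 2 ^ n ∧ ∃ l : ℕ,
      j * 2 ^ l ≤ 2 ^ n * ({σ : List Bool | σ.length = l} \ T).ncard}) :
    k < 2 ^ n ∧
      ∀ l : ℕ, k * 2 ^ l ≤ 2 ^ n * ({σ : List Bool | σ.length = l} \ T).ncard →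
        ∃ σ ∈ T, σ.length = l ∧
          ENNReal.ofReal ((1 - ε) * (2 : ℝ)⁻¹ ^ l) < μ (paths (subtree T σ)) := by
  have := isProbabilityMeasure_of_uniformOnCantor hμ
  simp only [ncard_diff_eq_card_missingFinset] at hk ⊢
  set J := {j : ℕ | j ≤ 2 ^ n ∧ ∃ l, j * 2 ^ l ≤ 2 ^ n * #(missingFinset T l)}
  have hJ : BddAbove J := ⟨2 ^ n, fun j hj => hj.1⟩
  obtain ⟨-, l₀, hl₀⟩ : k ∈ J := by rw [hk]; exact Nat.sSup_mem ⟨0, by simp [J]⟩ hJ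
  have hδT : δ < μ.real (paths T) :=
    (ENNReal.ofReal_lt_iff_lt_toReal hδ.le (measure_ne_top μ _)).1 hpos
  have hk_lt : k < 2 ^ n := lt_two_pow_of_mul_le_card_missingFinset hμ hδ hδT hl₀
  refine ⟨hk_lt, fun l hl => ?_⟩
  by_contra! hsmall
  simp only [← and_imp, ← mem_levelFinset] at hsmall
  have hε : ε < 1 := by
    obtain ⟨σ, hσ, hσ_pos⟩ := exists_measure_subtree_ne_zero (pos_of_gt hpos).ne' l
    by_contra! hε
    exact hσ_pos (nonpos_iff_eq_zero.1 ((hsmall σ hσ).trans_eq (ENNReal.ofReal_of_nonpos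
      (mul_nonpos_of_nonpos_of_nonneg (by linarith) (by positivity)))))
  have hsub (σ) (hσ : σ ∈ levelFinset T l) :
      μ.real (paths (subtree T σ)) < (1 - (2 : ℝ)⁻¹ ^ n / δ) / 2 ^ l :=
    calc μ.real (paths (subtree T σ)) ≤ (1 - ε) * (2 : ℝ)⁻¹ ^ l :=
          ENNReal.toReal_le_of_le_ofReal (by positivity) (hsmall σ hσ)
      _ < (1 - (2 : ℝ)⁻¹ ^ n / δ) / 2 ^ l := by
          rw [inv_pow 2 l, ← div_eq_mul_inv]
          gcongr
          exact (div_lt_iff₀ hδ).2 hn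
  obtain ⟨L, hL⟩ := exists_succ_mul_pow_le_card_missingFinset hμ hT hδ hδT hl hsub
  exact (le_csSup hJ ⟨hk_lt, L, hL⟩).not_gt (hk ▸ k.lt_succ_self)
end
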